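/- Let U ⊂ [0,1] be a finite set containing {0,1} that is an (ε/2)-cover of [0,1], i.e., every point of [0,1] is within ε/2 of some point of U. Then for any distribution D over [0,1]×{0,1}: dCE(D) ≤ dCE^U(D) ≤ dCE(D) + ε, where dCE^U restricts the calibrated variable u to take values in U. -/

import Mathlib

open MeasureTheory

noncomputable section

/-- The real value of a boolean outcome. -/
def yval (b : Bool) : ℝ := if b then 1 else 0

/-- `Π` is an extension of the prediction-outcome distribution `D`: it is a probability
distribution of triples `(u, v, y)` whose `(v, y)`-marginal is `D`, with `u ∈ [0,1]`,
and `(u, y)` perfectly calibrated, i.e. `E[y | u] = u` (equivalently,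
`E[(y - u) 1_{u ∈ S}] = 0` for every measurable `S`). -/
def IsExtension (D : Measure (ℝ × Bool)) (π : Measure (ℝ × (ℝ × Bool))) : Prop :=
  IsProbabilityMeasure π ∧
  π.map Prod.snd = D ∧
  (∀ᵐ p ∂π, p.1 ∈ Set.Icc (0 : ℝ) 1) ∧
  ∀ S : Set ℝ, MeasurableSet S →
    (∫ p in {p : ℝ × (ℝ × Bool) | p.1 ∈ S}, yval p.2.2 ∂π) =
      ∫ p in {p : ℝ × (ℝ × Bool) | p.1 ∈ S}, p.1 ∂π

/-- The lower distance to calibration of a distribution `D` on `[0,1] × {0,1}`. -/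
def dCE (D : Measure (ℝ × Bool)) : ℝ :=
  sInf {r : ℝ | ∃ π : Measure (ℝ × (ℝ × Bool)), IsExtension D π ∧
    r = ∫ p, |p.1 - p.2.1| ∂π}

/-- The smooth calibration error of a distribution `D` on `[0,1] × {0,1}`:
the supremum over `1`-Lipschitz weight functions `w : [0,1] → [-1,1]` of
`|E[(y - v) w(v)]|`. -/
def smCE (D : Measure (ℝ × Bool)) : ℝ :=
  sSup {r : ℝ | ∃ w : ℝ → ℝ, LipschitzWith 1 w ∧ (∀ t : ℝ, w t ∈ Set.Icc (-1 : ℝ) 1) ∧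
    r = |∫ p, (yval p.2 - p.1) * w p.1 ∂D|}

/-- The lower distance to calibration with the calibrated variable `u` restricted to
take values in `U`. -/
def dCEU (U : Set ℝ) (D : Measure (ℝ × Bool)) : ℝ :=
  sInf {r : ℝ | ∃ π : Measure (ℝ × (ℝ × Bool)), IsExtension D π ∧
    (∀ᵐ p ∂π, p.1 ∈ U) ∧ r = ∫ p, |p.1 - p.2.1| ∂π}

/-!
The lower bound holds because `dCEU` is an infimum over fewer extensions, and the perfect
predictor `u = y` is one of them since `{0, 1} ⊆ U`.

For the upper bound, round the calibrated value `u` of any extension to its neighbours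
`a ≤ u ≤ b` in `U`, which satisfy `b - a ≤ ε` by the covering property. Rounding independently
of the outcome would destroy calibration; instead, writing `u = l a + (1 - l) b`, choose `a` with
probability `l a / u` when `y = 1` and `l (1 - a) / (1 - u)` when `y = 0`. As `y` is
Bernoulli(`u`) given `u`, this makes `y` Bernoulli(`a`) given that `a` was chosen, and
Bernoulli(`b`) given that `b` was chosen, so the rounded extension is again calibrated; it moves
`u` by at most `ε`.
-/

open Set

theorem norm_le_one_of_mem_Icc {x : ℝ} (hx : x ∈ Icc (0 : ℝ) 1) : ‖x‖ ≤ 1 := by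
  rw [Real.norm_of_nonneg hx.1]; exact hx.2

namespace MeasureTheory.Measure

variable {X Y : Type*} [MeasurableSpace X] [MeasurableSpace Y] {μ : Measure X}

theorem integral_withDensity_ofReal {f : X → ℝ} (hf : Measurable f) (hf0 : 0 ≤ᵐ[μ] f)
    (g : X → ℝ) :
    ∫ x, g x ∂μ.withDensity (fun x => ENNReal.ofReal (f x)) = ∫ x, f x * g x ∂μ := by
  rw [integral_withDensity_eq_integral_toReal_smul hf.ennreal_ofReal
    (ae_of_all _ fun _ => ENNReal.ofReal_lt_top)]
  exact integral_congr_ae (hf0.mono fun x hx => by simp [ENNReal.toReal_ofReal hx])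

/-- The law of `F x` with probability `w x` and of `G x` otherwise, where `x ∼ μ`. -/
def mixMap (μ : Measure X) (w : X → ℝ) (F G : X → Y) : Measure Y :=
  (μ.withDensity fun x => ENNReal.ofReal (w x)).map F +
    (μ.withDensity fun x => ENNReal.ofReal (1 - w x)).map G

variable {w : X → ℝ} {F G : X → Y}

theorem withDensity_ofReal_add_one_sub (hwm : Measurable w) (hw : ∀ᵐ x ∂μ, w x ∈ Icc 0 1) :
    μ.withDensity (fun x => ENNReal.ofReal (w x)) +
      μ.withDensity (fun x => ENNReal.ofReal (1 - w x)) = μ := by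
  rw [← withDensity_add_left hwm.ennreal_ofReal]
  conv_rhs => rw [← withDensity_one (μ := μ)]
  refine withDensity_congr_ae (hw.mono fun x hx => ?_)
  simp [← ENNReal.ofReal_add hx.1 (sub_nonneg.2 hx.2)]

theorem map_mixMap {Z : Type*} [MeasurableSpace Z] {φ : Y → Z} {ψ : X → Z} (hwm : Measurable w)
    (hw : ∀ᵐ x ∂μ, w x ∈ Icc 0 1) (hF : Measurable F) (hG : Measurable G) (hφ : Measurable φ)
    (hφF : φ ∘ F = ψ) (hφG : φ ∘ G = ψ) :
    (μ.mixMap w F G).map φ = μ.map ψ := by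
  have hψ : Measurable ψ := hφF ▸ hφ.comp hF
  rw [mixMap, Measure.map_add _ _ hφ, map_map hφ hF, map_map hφ hG, hφF, hφG,
    ← Measure.map_add _ _ hψ, withDensity_ofReal_add_one_sub hwm hw]

theorem mixMap_apply_univ (hwm : Measurable w) (hw : ∀ᵐ x ∂μ, w x ∈ Icc 0 1)
    (hF : Measurable F) (hG : Measurable G) : μ.mixMap w F G univ = μ univ := by
  rw [mixMap, add_apply, map_apply hF .univ, map_apply hG .univ, preimage_univ, preimage_univ,
    ← add_apply, withDensity_ofReal_add_one_sub hwm hw]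

theorem ae_mixMap {p : Y → Prop} (hp : MeasurableSet {y | p y}) (hF : Measurable F)
    (hG : Measurable G) (hpF : ∀ x, p (F x)) (hpG : ∀ x, p (G x)) :
    ∀ᵐ y ∂μ.mixMap w F G, p y := by
  rw [mixMap, ae_add_measure_iff, ae_map_iff hF.aemeasurable hp, ae_map_iff hG.aemeasurable hp]
  exact ⟨ae_of_all _ hpF, ae_of_all _ hpG⟩

theorem integral_mixMap (hwm : Measurable w) (hw : ∀ᵐ x ∂μ, w x ∈ Icc 0 1) (hF : Measurable F)
    (hG : Measurable G) {f : Y → ℝ} (hf : Measurable f) (hfF : Integrable (fun x => f (F x)) μ)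
    (hfG : Integrable (fun x => f (G x)) μ) :
    ∫ y, f y ∂μ.mixMap w F G = ∫ x, (w x * f (F x) + (1 - w x) * f (G x)) ∂μ := by
  have hw' : Measurable fun x => 1 - w x := measurable_const.sub hwm
  have hle₁ : μ.withDensity (fun x => ENNReal.ofReal (w x)) ≤ μ := by
    conv_rhs => rw [← withDensity_one (μ := μ)]
    exact withDensity_mono (hw.mono fun x hx => by simpa using hx.2)
  have hle₂ : μ.withDensity (fun x => ENNReal.ofReal (1 - w x)) ≤ μ := by
    conv_rhs => rw [← withDensity_one (μ := μ)]
    exact withDensity_mono (hw.mono fun x hx => by simpa using hx.1)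
  rw [mixMap, integral_add_measure
    ((integrable_map_measure hf.aestronglyMeasurable hF.aemeasurable).2 (hfF.mono_measure hle₁))
    ((integrable_map_measure hf.aestronglyMeasurable hG.aemeasurable).2 (hfG.mono_measure hle₂)),
    integral_map hF.aemeasurable hf.aestronglyMeasurable,
    integral_map hG.aemeasurable hf.aestronglyMeasurable,
    integral_withDensity_ofReal hwm (hw.mono fun x hx => hx.1),
    integral_withDensity_ofReal hw' (hw.mono fun x hx => sub_nonneg.2 hx.2)]
  exact (integral_add
    (hfF.bdd_mul hwm.aestronglyMeasurable (hw.mono fun _ => norm_le_one_of_mem_Icc))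
    (hfG.bdd_mul hw'.aestronglyMeasurable
      (hw.mono fun _ hx => norm_le_one_of_mem_Icc (Icc.mem_iff_one_sub_mem.1 hx)))).symm

end MeasureTheory.Measure

def IsCalibrated (π : Measure (ℝ × (ℝ × Bool))) : Prop :=
  ∀ S : Set ℝ, MeasurableSet S →
    (∫ p in {p : ℝ × (ℝ × Bool) | p.1 ∈ S}, yval p.2.2 ∂π) =
      ∫ p in {p : ℝ × (ℝ × Bool) | p.1 ∈ S}, p.1 ∂π

@[simp] theorem yval_true : yval true = 1 := rfl

@[simp] theorem yval_false : yval false = 0 := rfl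

theorem yval_mem_Icc (b : Bool) : yval b ∈ Icc (0 : ℝ) 1 := by
  cases b <;> simp

@[fun_prop] theorem measurable_yval : Measurable yval := .of_discrete

theorem abs_indicator_mul_yval_sub_le (S : Set ℝ) {x : ℝ} (hx : x ∈ Icc (0 : ℝ) 1) (y : Bool) :
    |S.indicator (fun _ => (1 : ℝ)) x * (yval y - x)| ≤ 1 := by
  have hS : |S.indicator (fun _ => (1 : ℝ)) x| ≤ 1 := by
    by_cases h : x ∈ S <;> simp [h]
  have hy : |yval y - x| ≤ 1 := by
    rw [abs_le]; constructor <;> linarith [hx.1, hx.2, (yval_mem_Icc y).1, (yval_mem_Icc y).2]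
  simpa using mul_le_mul hS hy (abs_nonneg _) zero_le_one

section Calibration

variable {π : Measure (ℝ × (ℝ × Bool))} [IsFiniteMeasure π]

theorem integrable_fst_of_mem_Icc (hu : ∀ᵐ p ∂π, p.1 ∈ Icc (0 : ℝ) 1) :
    Integrable (fun p => p.1) π :=
  .of_bound measurable_fst.aestronglyMeasurable 1 (hu.mono fun _ => norm_le_one_of_mem_Icc)

theorem integrable_yval : Integrable (fun p : ℝ × (ℝ × Bool) => yval p.2.2) π :=
  .of_bound (by fun_prop) 1 (ae_of_all _ fun _ => norm_le_one_of_mem_Icc (yval_mem_Icc _))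

theorem IsCalibrated.integral_yval_mul (hπ : IsCalibrated π) (hu : ∀ᵐ p ∂π, p.1 ∈ Icc (0 : ℝ) 1)
    {g : ℝ → ℝ} (hg : Measurable g) :
    ∫ p, yval p.2.2 * g p.1 ∂π = ∫ p, p.1 * g p.1 ∂π := by
  have hmap : ∀ f : ℝ × (ℝ × Bool) → ℝ, Measurable f → 0 ≤ᵐ[π] f → Integrable f π →
      ∀ S, MeasurableSet S → (π.withDensity fun p => ENNReal.ofReal (f p)).map Prod.fst S =
        ENNReal.ofReal (∫ p in {p : ℝ × (ℝ × Bool) | p.1 ∈ S}, f p ∂π) := by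
    intro f hf hf0 hfi S hS
    rw [Measure.map_apply measurable_fst hS, withDensity_apply _ (measurable_fst hS),
      ofReal_integral_eq_lintegral_ofReal hfi.restrict (ae_restrict_of_ae hf0)]
    rfl
  -- calibration says exactly that the densities `y` and `u` push forward to the same measure on
  -- the `u`-axis
  have hν : (π.withDensity fun p => ENNReal.ofReal (yval p.2.2)).map Prod.fst =
      (π.withDensity fun p => ENNReal.ofReal p.1).map Prod.fst := by
    ext S hS
    rw [hmap _ (by fun_prop) (ae_of_all _ fun p => (yval_mem_Icc _).1) integrable_yval S hS,
      hmap _ measurable_fst (hu.mono fun p hp => hp.1) (integrable_fst_of_mem_Icc hu) S hS,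
      hπ S hS]
  have := congrArg (fun ν => ∫ x, g x ∂ν) hν
  rwa [integral_map measurable_fst.aemeasurable hg.aestronglyMeasurable,
    integral_map measurable_fst.aemeasurable hg.aestronglyMeasurable,
    Measure.integral_withDensity_ofReal (by fun_prop) (ae_of_all _ fun p => (yval_mem_Icc _).1),
    Measure.integral_withDensity_ofReal measurable_fst (hu.mono fun p hp => hp.1)] at this

theorem IsCalibrated.integral_eq_bernoulli (hπ : IsCalibrated π)
    (hu : ∀ᵐ p ∂π, p.1 ∈ Icc (0 : ℝ) 1) {h : ℝ → Bool → ℝ} (hhm : ∀ b, Measurable (h · b))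
    (hhi : ∀ b, Integrable (fun p : ℝ × (ℝ × Bool) => h p.1 b) π) :
    ∫ p, h p.1 p.2.2 ∂π = ∫ p, (p.1 * h p.1 true + (1 - p.1) * h p.1 false) ∂π := by
  have hΔ : Integrable (fun p : ℝ × (ℝ × Bool) => h p.1 true - h p.1 false) π :=
    (hhi true).sub (hhi false)
  have hyΔ : Integrable (fun p : ℝ × (ℝ × Bool) => yval p.2.2 * (h p.1 true - h p.1 false)) π :=
    hΔ.bdd_mul (by fun_prop) (ae_of_all _ fun _ => norm_le_one_of_mem_Icc (yval_mem_Icc _))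
  have huΔ : Integrable (fun p : ℝ × (ℝ × Bool) => p.1 * (h p.1 true - h p.1 false)) π :=
    hΔ.bdd_mul measurable_fst.aestronglyMeasurable (hu.mono fun _ => norm_le_one_of_mem_Icc)
  calc ∫ p, h p.1 p.2.2 ∂π
      = ∫ p, (h p.1 false + yval p.2.2 * (h p.1 true - h p.1 false)) ∂π := by
        congr 1; ext ⟨u, v, y⟩; cases y <;> simp
    _ = ∫ p, (h p.1 false + p.1 * (h p.1 true - h p.1 false)) ∂π := by
        rw [integral_add (hhi false) hyΔ, integral_add (hhi false) huΔ,
          hπ.integral_yval_mul hu (g := fun u => h u true - h u false)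
            ((hhm true).sub (hhm false))]
    _ = ∫ p, (p.1 * h p.1 true + (1 - p.1) * h p.1 false) ∂π := by
        congr 1; ext p; ring

theorem isCalibrated_of_integral_indicator_mul_eq_zero (hu : ∀ᵐ p ∂π, p.1 ∈ Icc (0 : ℝ) 1)
    (h : ∀ S : Set ℝ, MeasurableSet S →
      ∫ p, S.indicator (fun _ => (1 : ℝ)) p.1 * (yval p.2.2 - p.1) ∂π = 0) :
    IsCalibrated π := by
  intro S hS
  have hT : MeasurableSet {p : ℝ × (ℝ × Bool) | p.1 ∈ S} := measurable_fst hS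
  rw [← sub_eq_zero, ← integral_sub integrable_yval.integrableOn
    (integrable_fst_of_mem_Icc hu).integrableOn, ← integral_indicator hT, ← h S hS]
  congr 1; ext p
  by_cases hp : p.1 ∈ S <;> simp [hp]

end Calibration

section Splitting

theorem abs_mul_add_one_sub_mul_le {w x y C : ℝ} (hw : w ∈ Icc (0 : ℝ) 1) (hx : |x| ≤ C)
    (hy : |y| ≤ C) : |w * x + (1 - w) * y| ≤ C := by
  have h₁ : |w * x| ≤ w * C := by
    rw [abs_mul, abs_of_nonneg hw.1]; exact mul_le_mul_of_nonneg_left hx hw.1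
  have h₂ : |(1 - w) * y| ≤ (1 - w) * C := by
    rw [abs_mul, abs_of_nonneg (sub_nonneg.2 hw.2)]
    exact mul_le_mul_of_nonneg_left hy (sub_nonneg.2 hw.2)
  linarith [abs_add_le (w * x) ((1 - w) * y)]

theorem mul_add_one_sub_mul_le {w x y z : ℝ} (hw : w ∈ Icc (0 : ℝ) 1) (hx : x ≤ z) (hy : y ≤ z) :
    w * x + (1 - w) * y ≤ z := by
  nlinarith [mul_le_mul_of_nonneg_left hx hw.1, mul_le_mul_of_nonneg_left hy (sub_nonneg.2 hw.2)]

def downProb (l a u : ℝ) (y : Bool) : ℝ :=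
  if y then l * a / u else l * (1 - a) / (1 - u)

@[fun_prop] theorem Measurable.downProb {X : Type*} [MeasurableSpace X] {l a u : X → ℝ}
    {y : X → Bool} (hl : Measurable l) (ha : Measurable a) (hu : Measurable u)
    (hy : Measurable y) : Measurable fun x => downProb (l x) (a x) (u x) (y x) :=
  Measurable.ite (hy (measurableSet_singleton true)) (by fun_prop) (by fun_prop)

variable {l a b u : ℝ}

theorem downProb_mem_Icc (hl : l ∈ Icc (0 : ℝ) 1) (ha : a ∈ Icc (0 : ℝ) 1)
    (hb : b ∈ Icc (0 : ℝ) 1) (hmix : l * a + (1 - l) * b = u) (y : Bool) :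
    downProb l a u y ∈ Icc (0 : ℝ) 1 := by
  have h₁ : 0 ≤ l * a := mul_nonneg hl.1 ha.1
  have h₂ : 0 ≤ (1 - l) * b := mul_nonneg (sub_nonneg.2 hl.2) hb.1
  have h₃ : 0 ≤ l * (1 - a) := mul_nonneg hl.1 (sub_nonneg.2 ha.2)
  have h₄ : 0 ≤ (1 - l) * (1 - b) := mul_nonneg (sub_nonneg.2 hl.2) (sub_nonneg.2 hb.2)
  cases y
  · exact ⟨div_nonneg h₃ (by linarith), div_le_one_of_le₀ (by linarith) (by linarith)⟩
  · exact ⟨div_nonneg h₁ (by linarith), div_le_one_of_le₀ (by linarith) (by linarith)⟩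

theorem mul_downProb_true (hl : l ∈ Icc (0 : ℝ) 1) (ha : 0 ≤ a) (hb : 0 ≤ b)
    (hmix : l * a + (1 - l) * b = u) : u * downProb l a u true = l * a := by
  rcases eq_or_ne u 0 with rfl | hu
  · nlinarith [mul_nonneg hl.1 ha, mul_nonneg (sub_nonneg.2 hl.2) hb]
  · simp [downProb, mul_div_cancel₀ _ hu]

theorem one_sub_mul_downProb_false (hl : l ∈ Icc (0 : ℝ) 1) (ha : a ≤ 1) (hb : b ≤ 1)
    (hmix : l * a + (1 - l) * b = u) : (1 - u) * downProb l a u false = l * (1 - a) := by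
  rcases eq_or_ne u 1 with rfl | hu
  · nlinarith [mul_nonneg hl.1 (sub_nonneg.2 ha), mul_nonneg (sub_nonneg.2 hl.2) (sub_nonneg.2 hb)]
  · simp [downProb, mul_div_cancel₀ _ (sub_ne_zero.2 (Ne.symm hu))]

/-- Conditional on the rounded value `x`, the expectation of `φ x * (y - x)` vanishes. -/
theorem bernoulli_average_downProb_eq_zero (hl : l ∈ Icc (0 : ℝ) 1) (ha : a ∈ Icc (0 : ℝ) 1)
    (hb : b ∈ Icc (0 : ℝ) 1) (hmix : l * a + (1 - l) * b = u) (φ : ℝ → ℝ) :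
    u * (downProb l a u true * (φ a * (yval true - a)) +
        (1 - downProb l a u true) * (φ b * (yval true - b))) +
      (1 - u) * (downProb l a u false * (φ a * (yval false - a)) +
        (1 - downProb l a u false) * (φ b * (yval false - b))) = 0 := by
  have h₁ := mul_downProb_true hl ha.1 hb.1 hmix
  have h₀ := one_sub_mul_downProb_false hl ha.2 hb.2 hmix
  simp only [yval_true, yval_false]
  linear_combination (φ a * (1 - a) - φ b * (1 - b)) * h₁ + (φ b * b - φ a * a) * h₀ -
    φ b * hmix

theorem sub_div_sub_mem_Icc (ha : a ≤ u) (hb : u ≤ b) : (b - u) / (b - a) ∈ Icc (0 : ℝ) 1 := by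
  rcases eq_or_lt_of_le (ha.trans hb) with hab | hab
  · simp [hab]
  · exact ⟨div_nonneg (by linarith) (by linarith), div_le_one_of_le₀ (by linarith) (by linarith)⟩

/-- For `a = b` the weight is the junk value `0 / 0 = 0`, and the identity still holds. -/
theorem sub_div_sub_mul_add_one_sub_mul (ha : a ≤ u) (hb : u ≤ b) :
    (b - u) / (b - a) * a + (1 - (b - u) / (b - a)) * b = u := by
  rcases eq_or_lt_of_le (ha.trans hb) with hab | hab
  · subst hab; simp [le_antisymm ha hb]
  · field_simp [(sub_pos.2 hab).ne']
    ring

end Splitting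

section Rounding

variable {U : Set ℝ} {u : ℝ}

def roundDown (U : Set ℝ) (u : ℝ) : ℝ := sSup (insert 0 (U ∩ Iic u))

def roundUp (U : Set ℝ) (u : ℝ) : ℝ := sInf (insert 1 (U ∩ Ici u))

theorem le_roundDown (hUfin : U.Finite) {x : ℝ} (hx : x ∈ insert 0 (U ∩ Iic u)) :
    x ≤ roundDown U u :=
  le_csSup ((hUfin.inter_of_left _).insert 0).bddAbove hx

theorem roundUp_le (hUfin : U.Finite) {x : ℝ} (hx : x ∈ insert 1 (U ∩ Ici u)) :
    roundUp U u ≤ x :=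
  csInf_le ((hUfin.inter_of_left _).insert 1).bddBelow hx

theorem roundDown_mem (hUfin : U.Finite) (h0 : (0 : ℝ) ∈ U) : roundDown U u ∈ U := by
  rcases (insert_nonempty (0 : ℝ) (U ∩ Iic u)).csSup_mem ((hUfin.inter_of_left _).insert 0)
    with h | h
  · rw [roundDown, h]; exact h0
  · exact h.1

theorem roundUp_mem (hUfin : U.Finite) (h1 : (1 : ℝ) ∈ U) : roundUp U u ∈ U := by
  rcases (insert_nonempty (1 : ℝ) (U ∩ Ici u)).csInf_mem ((hUfin.inter_of_left _).insert 1)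
    with h | h
  · rw [roundUp, h]; exact h1
  · exact h.1

theorem roundDown_mem_Icc (hUfin : U.Finite) (hUsub : U ⊆ Icc 0 1) :
    roundDown U u ∈ Icc (0 : ℝ) 1 :=
  ⟨le_roundDown hUfin (mem_insert _ _), csSup_le (insert_nonempty _ _) <| by
    rintro x (rfl | hx)
    exacts [zero_le_one, (hUsub hx.1).2]⟩

theorem roundUp_mem_Icc (hUfin : U.Finite) (hUsub : U ⊆ Icc 0 1) :
    roundUp U u ∈ Icc (0 : ℝ) 1 :=
  ⟨le_csInf (insert_nonempty _ _) <| by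
    rintro x (rfl | hx)
    exacts [zero_le_one, (hUsub hx.1).1], roundUp_le hUfin (mem_insert _ _)⟩

theorem roundDown_le (hu : 0 ≤ u) : roundDown U u ≤ u :=
  csSup_le (insert_nonempty _ _) <| by
    rintro x (rfl | hx)
    exacts [hu, hx.2]

theorem le_roundUp (hu : u ≤ 1) : u ≤ roundUp U u :=
  le_csInf (insert_nonempty _ _) <| by
    rintro x (rfl | hx)
    exacts [hu, hx.2]

theorem monotone_roundDown (hUfin : U.Finite) : Monotone (roundDown U) := fun _ _ h =>
  csSup_le_csSup ((hUfin.inter_of_left _).insert 0).bddAbove (insert_nonempty _ _)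
    (insert_subset_insert (inter_subset_inter_right U (Iic_subset_Iic.2 h)))

theorem monotone_roundUp (hUfin : U.Finite) : Monotone (roundUp U) := fun _ _ h =>
  csInf_le_csInf ((hUfin.inter_of_left _).insert 1).bddBelow (insert_nonempty _ _)
    (insert_subset_insert (inter_subset_inter_right U (Ici_subset_Ici.2 h)))

theorem measurable_roundDown (hUfin : U.Finite) : Measurable (roundDown U) :=
  (monotone_roundDown hUfin).measurable

theorem measurable_roundUp (hUfin : U.Finite) : Measurable (roundUp U) :=
  (monotone_roundUp hUfin).measurable

/-- The point of `U` within `ε / 2` of the midpoint of `[roundDown U u, roundUp U u]` cannot lie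
strictly between the two. -/
theorem roundUp_sub_roundDown_le (hUfin : U.Finite) (hUsub : U ⊆ Icc 0 1) {ε : ℝ}
    (hcover : ∀ x ∈ Icc (0 : ℝ) 1, ∃ y ∈ U, |x - y| ≤ ε / 2) (u : ℝ) :
    roundUp U u - roundDown U u ≤ ε := by
  have hA := roundDown_mem_Icc (u := u) hUfin hUsub
  have hB := roundUp_mem_Icc (u := u) hUfin hUsub
  obtain ⟨c, hcU, hc⟩ := hcover ((roundDown U u + roundUp U u) / 2)
    ⟨by linarith [hA.1, hB.1], by linarith [hA.2, hB.2]⟩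
  rw [abs_le] at hc
  rcases le_or_gt c u with hcu | hcu
  · linarith [le_roundDown hUfin (mem_insert_of_mem _ ⟨hcU, hcu⟩)]
  · linarith [roundUp_le hUfin (mem_insert_of_mem _ ⟨hcU, hcu.le⟩)]

end Rounding

section RoundedExtension

variable {U : Set ℝ} {u : ℝ}

def roundWeight (U : Set ℝ) (u : ℝ) : ℝ := (roundUp U u - u) / (roundUp U u - roundDown U u)

theorem roundWeight_mem_Icc (hu : u ∈ Icc (0 : ℝ) 1) : roundWeight U u ∈ Icc (0 : ℝ) 1 :=
  sub_div_sub_mem_Icc (roundDown_le hu.1) (le_roundUp hu.2)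

theorem roundWeight_mul_add_one_sub_mul (hu : u ∈ Icc (0 : ℝ) 1) :
    roundWeight U u * roundDown U u + (1 - roundWeight U u) * roundUp U u = u :=
  sub_div_sub_mul_add_one_sub_mul (roundDown_le hu.1) (le_roundUp hu.2)

theorem measurable_roundWeight (hUfin : U.Finite) : Measurable (roundWeight U) := by
  have := measurable_roundDown hUfin
  have := measurable_roundUp hUfin
  unfold roundWeight
  fun_prop

def roundProb (U : Set ℝ) (u : ℝ) (y : Bool) : ℝ :=
  downProb (roundWeight U u) (roundDown U u) u y

theorem roundProb_mem_Icc (hUfin : U.Finite) (hUsub : U ⊆ Icc 0 1) (hu : u ∈ Icc (0 : ℝ) 1)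
    (y : Bool) : roundProb U u y ∈ Icc (0 : ℝ) 1 :=
  downProb_mem_Icc (roundWeight_mem_Icc hu) (roundDown_mem_Icc hUfin hUsub)
    (roundUp_mem_Icc hUfin hUsub) (roundWeight_mul_add_one_sub_mul hu) y

theorem measurable_roundProb (hUfin : U.Finite) :
    Measurable fun q : ℝ × (ℝ × Bool) => roundProb U q.1 q.2.2 := by
  have := measurable_roundDown hUfin
  have := measurable_roundWeight hUfin
  unfold roundProb
  fun_prop

def roundExt (U : Set ℝ) (π : Measure (ℝ × (ℝ × Bool))) : Measure (ℝ × (ℝ × Bool)) :=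
  π.mixMap (fun q => roundProb U q.1 q.2.2) (fun q => (roundDown U q.1, q.2))
    (fun q => (roundUp U q.1, q.2))

variable {π : Measure (ℝ × (ℝ × Bool))}

theorem ae_roundProb_mem_Icc (hUfin : U.Finite) (hUsub : U ⊆ Icc 0 1)
    (hu : ∀ᵐ q ∂π, q.1 ∈ Icc (0 : ℝ) 1) : ∀ᵐ q ∂π, roundProb U q.1 q.2.2 ∈ Icc (0 : ℝ) 1 :=
  hu.mono fun q hq => roundProb_mem_Icc hUfin hUsub hq q.2.2

theorem measurable_roundDown_prod (hUfin : U.Finite) :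
    Measurable fun q : ℝ × (ℝ × Bool) => (roundDown U q.1, q.2) := by
  have := measurable_roundDown hUfin
  fun_prop

theorem measurable_roundUp_prod (hUfin : U.Finite) :
    Measurable fun q : ℝ × (ℝ × Bool) => (roundUp U q.1, q.2) := by
  have := measurable_roundUp hUfin
  fun_prop

theorem map_snd_roundExt (hUfin : U.Finite) (hUsub : U ⊆ Icc 0 1)
    (hu : ∀ᵐ q ∂π, q.1 ∈ Icc (0 : ℝ) 1) : (roundExt U π).map Prod.snd = π.map Prod.snd :=
  Measure.map_mixMap (measurable_roundProb hUfin) (ae_roundProb_mem_Icc hUfin hUsub hu)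
    (measurable_roundDown_prod hUfin) (measurable_roundUp_prod hUfin) measurable_snd rfl rfl

theorem roundExt_apply_univ (hUfin : U.Finite) (hUsub : U ⊆ Icc 0 1)
    (hu : ∀ᵐ q ∂π, q.1 ∈ Icc (0 : ℝ) 1) : roundExt U π univ = π univ :=
  Measure.mixMap_apply_univ (measurable_roundProb hUfin) (ae_roundProb_mem_Icc hUfin hUsub hu)
    (measurable_roundDown_prod hUfin) (measurable_roundUp_prod hUfin)

theorem ae_mem_roundExt {s : Set ℝ} (hs : MeasurableSet s) (hUfin : U.Finite)
    (hdown : ∀ u, roundDown U u ∈ s) (hup : ∀ u, roundUp U u ∈ s) :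
    ∀ᵐ p ∂roundExt U π, p.1 ∈ s :=
  Measure.ae_mixMap (measurable_fst hs) (measurable_roundDown_prod hUfin)
    (measurable_roundUp_prod hUfin) (fun q => hdown q.1) (fun q => hup q.1)

theorem isCalibrated_roundExt (hUfin : U.Finite) (hUsub : U ⊆ Icc 0 1) [IsFiniteMeasure π]
    (hπ : IsCalibrated π) (hu : ∀ᵐ q ∂π, q.1 ∈ Icc (0 : ℝ) 1) : IsCalibrated (roundExt U π) := by
  have : IsFiniteMeasure (roundExt U π) :=
    ⟨by rw [roundExt_apply_univ hUfin hUsub hu]; exact measure_lt_top _ _⟩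
  have hA := measurable_roundDown hUfin
  have hB := measurable_roundUp hUfin
  refine isCalibrated_of_integral_indicator_mul_eq_zero
    (ae_mem_roundExt measurableSet_Icc hUfin (fun _ => roundDown_mem_Icc hUfin hUsub)
      (fun _ => roundUp_mem_Icc hUfin hUsub)) fun S hS => ?_
  set φ := S.indicator fun _ => (1 : ℝ)
  have hφ : Measurable φ := measurable_const.indicator hS
  have hbound : ∀ x ∈ Icc (0 : ℝ) 1, ∀ y, |φ x * (yval y - x)| ≤ 1 := fun _ hx y =>
    abs_indicator_mul_yval_sub_le S hx y
  have hint : ∀ r : ℝ → ℝ, Measurable r → (∀ x, r x ∈ Icc (0 : ℝ) 1) →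
      Integrable (fun q : ℝ × (ℝ × Bool) => φ (r q.1) * (yval q.2.2 - r q.1)) π := fun r hr hr01 =>
    .of_bound (by fun_prop) 1 (ae_of_all _ fun q => by
      rw [Real.norm_eq_abs]; exact hbound _ (hr01 _) _)
  rw [roundExt, Measure.integral_mixMap (measurable_roundProb hUfin)
    (ae_roundProb_mem_Icc hUfin hUsub hu) (measurable_roundDown_prod hUfin)
    (measurable_roundUp_prod hUfin) (by fun_prop)
    (hint _ hA fun _ => roundDown_mem_Icc hUfin hUsub)
    (hint _ hB fun _ => roundUp_mem_Icc hUfin hUsub)]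
  set h : ℝ → Bool → ℝ := fun u y =>
    roundProb U u y * (φ (roundDown U u) * (yval y - roundDown U u)) +
      (1 - roundProb U u y) * (φ (roundUp U u) * (yval y - roundUp U u))
  have hhm : ∀ b, Measurable (h · b) := by
    have := measurable_roundWeight hUfin
    intro b; unfold h roundProb; fun_prop
  refine (hπ.integral_eq_bernoulli hu (h := h) hhm fun b => ?_).trans ?_
  · refine .of_bound ((hhm b).comp measurable_fst).aestronglyMeasurable 1
      (hu.mono fun q hq => ?_)
    exact abs_mul_add_one_sub_mul_le (roundProb_mem_Icc hUfin hUsub hq b)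
      (hbound _ (roundDown_mem_Icc hUfin hUsub) b) (hbound _ (roundUp_mem_Icc hUfin hUsub) b)
  · exact integral_eq_zero_of_ae (hu.mono fun q hq => bernoulli_average_downProb_eq_zero
      (roundWeight_mem_Icc hq) (roundDown_mem_Icc hUfin hUsub) (roundUp_mem_Icc hUfin hUsub)
      (roundWeight_mul_add_one_sub_mul hq) φ)

theorem integral_abs_sub_roundExt_le (hUfin : U.Finite) (hUsub : U ⊆ Icc 0 1) {ε : ℝ}
    (hcover : ∀ x ∈ Icc (0 : ℝ) 1, ∃ y ∈ U, |x - y| ≤ ε / 2) [IsProbabilityMeasure π]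
    (hu : ∀ᵐ q ∂π, q.1 ∈ Icc (0 : ℝ) 1) (hv : ∀ᵐ q ∂π, q.2.1 ∈ Icc (0 : ℝ) 1) :
    ∫ p, |p.1 - p.2.1| ∂roundExt U π ≤ ∫ p, |p.1 - p.2.1| ∂π + ε := by
  have hA := measurable_roundDown hUfin
  have hB := measurable_roundUp hUfin
  have hint : ∀ r : ℝ × (ℝ × Bool) → ℝ, Measurable r → (∀ᵐ q ∂π, r q ∈ Icc (0 : ℝ) 1) →
      Integrable (fun q => |r q - q.2.1|) π := fun r hr hr01 =>
    .of_bound (by fun_prop) 2 ((hr01.and hv).mono fun q hq => by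
      rw [Real.norm_eq_abs, abs_abs, abs_le]
      constructor <;> linarith [hq.1.1, hq.1.2, hq.2.1, hq.2.2])
  have hid := hint _ measurable_fst hu
  rw [roundExt, Measure.integral_mixMap (measurable_roundProb hUfin)
    (ae_roundProb_mem_Icc hUfin hUsub hu) (measurable_roundDown_prod hUfin)
    (measurable_roundUp_prod hUfin) (by fun_prop)
    (hint _ (hA.comp measurable_fst) (ae_of_all _ fun _ => roundDown_mem_Icc hUfin hUsub))
    (hint _ (hB.comp measurable_fst) (ae_of_all _ fun _ => roundUp_mem_Icc hUfin hUsub))]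
  have hε : ∫ q, (|q.1 - q.2.1| + ε) ∂π = ∫ q, |q.1 - q.2.1| ∂π + ε := by
    simp [integral_add hid (integrable_const ε)]
  refine (integral_mono_of_nonneg (hu.mono fun q hq => ?_) (hid.add (integrable_const ε))
    (hu.mono fun q hq => ?_)).trans_eq hε
  · have hw := roundProb_mem_Icc hUfin hUsub hq q.2.2
    exact add_nonneg (mul_nonneg hw.1 (abs_nonneg _))
      (mul_nonneg (sub_nonneg.2 hw.2) (abs_nonneg _))
  have hgap := roundUp_sub_roundDown_le hUfin hUsub hcover q.1
  have hAu := roundDown_le (U := U) hq.1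
  have huB := le_roundUp (U := U) hq.2
  dsimp only [Pi.add_apply]
  refine mul_add_one_sub_mul_le (roundProb_mem_Icc hUfin hUsub hq q.2.2) ?_ ?_
  · linarith [abs_sub_le (roundDown U q.1) q.1 q.2.1, abs_of_nonpos (sub_nonpos.2 hAu)]
  · linarith [abs_sub_le (roundUp U q.1) q.1 q.2.1, abs_of_nonneg (sub_nonneg.2 huB)]

end RoundedExtension

section DistanceToCalibration

variable {U : Set ℝ} {D : Measure (ℝ × Bool)}

def outcomeExt (D : Measure (ℝ × Bool)) : Measure (ℝ × (ℝ × Bool)) :=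
  D.map fun q => (yval q.2, q)

theorem measurable_prodMk_yval_snd : Measurable fun q : ℝ × Bool => (yval q.2, q) := by fun_prop

theorem isExtension_outcomeExt [IsProbabilityMeasure D] : IsExtension D (outcomeExt D) := by
  have hdiag : ∀ᵐ p ∂outcomeExt D, p.1 = yval p.2.2 :=
    (ae_map_iff measurable_prodMk_yval_snd.aemeasurable
      (measurableSet_eq_fun measurable_fst (by fun_prop))).2 (ae_of_all _ fun _ => rfl)
  refine ⟨Measure.isProbabilityMeasure_map measurable_prodMk_yval_snd.aemeasurable, ?_, ?_,
    fun S _ => ?_⟩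
  · rw [outcomeExt, Measure.map_map measurable_snd measurable_prodMk_yval_snd]
    exact Measure.map_id
  · exact hdiag.mono fun p hp => hp ▸ yval_mem_Icc _
  · exact integral_congr_ae (ae_restrict_of_ae (hdiag.mono fun p hp => hp.symm))

theorem ae_mem_outcomeExt (hU01 : ({0, 1} : Set ℝ) ⊆ U) : ∀ᵐ p ∂outcomeExt D, p.1 ∈ U := by
  refine ((ae_map_iff measurable_prodMk_yval_snd.aemeasurable
    (measurable_fst (toFinite {(0 : ℝ), 1}).measurableSet)).2 (ae_of_all _ fun q => ?_)).mono
    fun p hp => hU01 hp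
  cases q.2 <;> simp

theorem dCE_le_dCEU (hU01 : ({0, 1} : Set ℝ) ⊆ U) [IsProbabilityMeasure D] :
    dCE D ≤ dCEU U D :=
  csInf_le_csInf ⟨0, by rintro r ⟨π, -, rfl⟩; exact integral_nonneg fun _ => abs_nonneg _⟩
    ⟨_, outcomeExt D, isExtension_outcomeExt, ae_mem_outcomeExt hU01, rfl⟩
    (by rintro r ⟨π, hπ, -, rfl⟩; exact ⟨π, hπ, rfl⟩)

theorem isExtension_roundExt (hUfin : U.Finite) (hUsub : U ⊆ Icc 0 1)
    {π : Measure (ℝ × (ℝ × Bool))} (hπ : IsExtension D π) : IsExtension D (roundExt U π) := by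
  obtain ⟨hprob, hmap, hu, hcal⟩ := hπ
  refine ⟨?_, by rw [map_snd_roundExt hUfin hUsub hu, hmap],
    ae_mem_roundExt measurableSet_Icc hUfin (fun _ => roundDown_mem_Icc hUfin hUsub)
      (fun _ => roundUp_mem_Icc hUfin hUsub), isCalibrated_roundExt hUfin hUsub hcal hu⟩
  exact ⟨by rw [roundExt_apply_univ hUfin hUsub hu, measure_univ]⟩

theorem dCEU_le_integral_add (hUfin : U.Finite) (hU01 : ({0, 1} : Set ℝ) ⊆ U)
    (hUsub : U ⊆ Icc 0 1) {ε : ℝ} (hcover : ∀ x ∈ Icc (0 : ℝ) 1, ∃ y ∈ U, |x - y| ≤ ε / 2)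
    (hD01 : ∀ᵐ p ∂D, p.1 ∈ Icc (0 : ℝ) 1) {π : Measure (ℝ × (ℝ × Bool))}
    (hπ : IsExtension D π) : dCEU U D ≤ ∫ p, |p.1 - p.2.1| ∂π + ε := by
  have := hπ.1
  have hv : ∀ᵐ q ∂π, q.2.1 ∈ Icc (0 : ℝ) 1 :=
    ae_of_ae_map measurable_snd.aemeasurable (hπ.2.1 ▸ hD01)
  have hU : ∀ᵐ p ∂roundExt U π, p.1 ∈ U := ae_mem_roundExt hUfin.measurableSet hUfin
    (fun _ => roundDown_mem hUfin (hU01 (by simp))) (fun _ => roundUp_mem hUfin (hU01 (by simp)))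
  calc dCEU U D ≤ ∫ p, |p.1 - p.2.1| ∂roundExt U π :=
        csInf_le ⟨0, by rintro r ⟨π, -, -, rfl⟩; exact integral_nonneg fun _ => abs_nonneg _⟩
          ⟨roundExt U π, isExtension_roundExt hUfin hUsub hπ, hU, rfl⟩
    _ ≤ ∫ p, |p.1 - p.2.1| ∂π + ε :=
        integral_abs_sub_roundExt_le hUfin hUsub hcover hπ.2.2.1 hv

theorem dCEU_le_dCE_add (hUfin : U.Finite) (hU01 : ({0, 1} : Set ℝ) ⊆ U)
    (hUsub : U ⊆ Icc 0 1) {ε : ℝ} (hcover : ∀ x ∈ Icc (0 : ℝ) 1, ∃ y ∈ U, |x - y| ≤ ε / 2)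
    [IsProbabilityMeasure D] (hD01 : ∀ᵐ p ∂D, p.1 ∈ Icc (0 : ℝ) 1) :
    dCEU U D ≤ dCE D + ε := by
  rw [← sub_le_iff_le_add]
  refine le_csInf ⟨_, outcomeExt D, isExtension_outcomeExt, rfl⟩ ?_
  rintro r ⟨π, hπ, rfl⟩
  exact sub_le_iff_le_add.2 (dCEU_le_integral_add hUfin hU01 hUsub hcover hD01 hπ)

end DistanceToCalibration

theorem stmt17_general (U : Set ℝ) (hUfin : U.Finite) (hU01 : ({0, 1} : Set ℝ) ⊆ U)
    (hUsub : U ⊆ Set.Icc (0 : ℝ) 1) (ε : ℝ)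
    (hcover : ∀ x ∈ Set.Icc (0 : ℝ) 1, ∃ y ∈ U, |x - y| ≤ ε / 2)
    (D : Measure (ℝ × Bool)) (hD : IsProbabilityMeasure D)
    (hD01 : ∀ᵐ p ∂D, p.1 ∈ Set.Icc (0 : ℝ) 1) :
    dCE D ≤ dCEU U D ∧ dCEU U D ≤ dCE D + ε :=
  ⟨dCE_le_dCEU hU01, dCEU_le_dCE_add hUfin hU01 hUsub hcover hD01⟩

theorem stmt17 (U : Set ℝ) (hUfin : U.Finite) (hU01 : ({0, 1} : Set ℝ) ⊆ U)
    (hUsub : U ⊆ Set.Icc (0 : ℝ) 1) (ε : ℝ) (hε : 0 < ε)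
    (hcover : ∀ x ∈ Set.Icc (0 : ℝ) 1, ∃ y ∈ U, |x - y| ≤ ε / 2)
    (D : Measure (ℝ × Bool)) (hD : IsProbabilityMeasure D)
    (hD01 : ∀ᵐ p ∂D, p.1 ∈ Set.Icc (0 : ℝ) 1) :
    dCE D ≤ dCEU U D ∧ dCEU U D ≤ dCE D + ε :=
  stmt17_general U hUfin hU01 hUsub ε hcover D hD hD01
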